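/- Let q ∈ (0,1), J ≥ 1, and let μ₁, …, μ_J be strictly negative real numbers. Let c be the unique real number such that Σ_{i=1}^J Φ(μ_i/2 + c/μ_i) = Jq, and set w_i = Φ(μ_i/2 + c/μ_i)/q. Then 0 ≤ w_i ≤ 1/q, Σ_{i=1}^J w_i = J, and the vector (w₁, …, w_J) maximizes the average-power objective Σ_{i=1}^J Φ(Φ⁻¹(q v_i) − μ_i) over all vectors v ∈ [0, 1/q]^J with Σ_{i=1}^J v_i = J. -/

import Mathlib

/-!
Write `φ` for the standard normal density, so that `φ (t - μ) / φ t = exp (μ t - μ² / 2)`.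
For `μ < 0` this likelihood ratio is decreasing in `t` and equals `exp c` exactly at
`y = μ / 2 + c / μ`. Hence `x ↦ Φ (x - μ) - exp c * Φ x`, whose derivative is
`φ (x - μ) - exp c * φ x`, attains its maximum at `y`, and by letting `x → ∓∞` also dominates
its limits `0` and `1 - exp c`. With `x = Φ⁻¹ (q v)` this is a Lagrangian bound: every `v`
satisfies `power(v) - exp c * q v ≤ power(w) - exp c * q w`, where `w = Φ y / q`. Summing over `i`,
the multiplier terms cancel because `Σ q vᵢ = J q = Σ Φ yᵢ`.
-/

/-- The standard normal cumulative distribution function. -/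
noncomputable def Phi (x : ℝ) : ℝ :=
  ∫ t in Set.Iic x, (Real.sqrt (2 * Real.pi))⁻¹ * Real.exp (-t ^ 2 / 2)

/-- The inverse of the standard normal CDF, mapping (0,1) onto ℝ. -/
noncomputable def PhiInv : ℝ → ℝ := Function.invFun Phi

/-- The power `Φ(Φ⁻¹(qv) − μ)` of the one-sided Gaussian test at level `q v`,
extended by continuity: it equals `0` at `v = 0` and `1` at `v = 1/q`. -/
noncomputable def oneSidedPower (q μ v : ℝ) : ℝ :=
  if v = 0 then 0 else if v = 1 / q then 1 else Phi (PhiInv (q * v) - μ)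

open MeasureTheory ProbabilityTheory Set Filter Real

local notation "φ" => gaussianPDFReal 0 1

lemma gaussianPDFReal_zero_one_sub (m t : ℝ) : φ (t - m) = exp (m * t - m ^ 2 / 2) * φ t := by
  simp only [gaussianPDFReal, NNReal.coe_one, mul_one, sub_zero]
  rw [mul_left_comm, ← exp_add]
  ring_nf

lemma Phi_eq_integral (x : ℝ) : Phi x = ∫ t in Iic x, φ t := by
  simp [Phi, gaussianPDFReal]

lemma Phi_eq_cdf : Phi = cdf (gaussianReal 0 1) := by
  ext x
  rw [cdf_eq_real, measureReal_def, gaussianReal_apply_eq_integral _ one_ne_zero,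
    ENNReal.toReal_ofReal (setIntegral_nonneg measurableSet_Iic fun t _ ↦
      gaussianPDFReal_nonneg 0 1 t), Phi_eq_integral]

lemma Phi_sub_Phi (a b : ℝ) : Phi b - Phi a = ∫ t in a..b, φ t := by
  simp only [Phi_eq_integral]
  exact intervalIntegral.integral_Iic_sub_Iic (integrable_gaussianPDFReal 0 1).integrableOn
    (integrable_gaussianPDFReal 0 1).integrableOn

lemma Phi_sub_sub_Phi_sub (a b m : ℝ) : Phi (b - m) - Phi (a - m) = ∫ t in a..b, φ (t - m) := by
  rw [intervalIntegral.integral_comp_sub_right, Phi_sub_Phi]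

lemma Phi_strictMono : StrictMono Phi := fun a b hab ↦ by
  have : 0 < ∫ t in a..b, φ t :=
    intervalIntegral.intervalIntegral_pos_of_pos_on
      (integrable_gaussianPDFReal 0 1).intervalIntegrable
      (fun t _ ↦ gaussianPDFReal_pos 0 1 t one_ne_zero) hab
  linarith [Phi_sub_Phi a b]

lemma continuous_Phi : Continuous Phi := by
  have : Phi = fun x ↦ Phi 0 + ∫ t in 0..x, φ t := funext fun x ↦ by rw [← Phi_sub_Phi]; ring
  rw [this]
  exact continuous_const.add <| intervalIntegral.continuous_primitive
    (fun _ _ ↦ (integrable_gaussianPDFReal 0 1).intervalIntegrable) 0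

lemma tendsto_Phi_atBot : Tendsto Phi atBot (nhds 0) := Phi_eq_cdf ▸ tendsto_cdf_atBot _

lemma tendsto_Phi_atTop : Tendsto Phi atTop (nhds 1) := Phi_eq_cdf ▸ tendsto_cdf_atTop _

lemma Phi_pos (x : ℝ) : 0 < Phi x :=
  (Phi_eq_cdf ▸ cdf_nonneg _ (x - 1)).trans_lt (Phi_strictMono (sub_one_lt x))

lemma Phi_lt_one (x : ℝ) : Phi x < 1 :=
  (Phi_strictMono (lt_add_one x)).trans_le (Phi_eq_cdf ▸ cdf_le_one _ (x + 1))

lemma Phi_PhiInv {u : ℝ} (hu : u ∈ Ioo 0 1) : Phi (PhiInv u) = u := by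
  obtain ⟨a, ha⟩ := (tendsto_Phi_atBot.eventually_lt_const hu.1).exists
  obtain ⟨b, hb⟩ := (tendsto_Phi_atTop.eventually_const_lt hu.2).exists
  have hab : a ≤ b := Phi_strictMono.le_iff_le.1 (ha.trans hb).le
  obtain ⟨x, -, hx⟩ := intermediate_value_Icc hab continuous_Phi.continuousOn ⟨ha.le, hb.le⟩
  exact Function.invFun_eq ⟨x, hx⟩

lemma PhiInv_Phi (x : ℝ) : PhiInv (Phi x) = x :=
  Function.leftInverse_invFun Phi_strictMono.injective x

section LikelihoodRatio

variable {m y c : ℝ}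

lemma gaussianPDFReal_sub_le (hm : m < 0) (hy : m * y - m ^ 2 / 2 = c) {t : ℝ} (ht : y ≤ t) :
    φ (t - m) ≤ exp c * φ t := by
  rw [gaussianPDFReal_zero_one_sub]
  exact mul_le_mul_of_nonneg_right (exp_le_exp.2 (by nlinarith)) (gaussianPDFReal_nonneg 0 1 t)

lemma le_gaussianPDFReal_sub (hm : m < 0) (hy : m * y - m ^ 2 / 2 = c) {t : ℝ} (ht : t ≤ y) :
    exp c * φ t ≤ φ (t - m) := by
  rw [gaussianPDFReal_zero_one_sub]
  exact mul_le_mul_of_nonneg_right (exp_le_exp.2 (by nlinarith)) (gaussianPDFReal_nonneg 0 1 t)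

lemma Phi_sub_sub_exp_mul_Phi_le (hm : m < 0) (hy : m * y - m ^ 2 / 2 = c) (x : ℝ) :
    Phi (x - m) - exp c * Phi x ≤ Phi (y - m) - exp c * Phi y := by
  have hint := integrable_gaussianPDFReal 0 1
  suffices ∫ t in y..x, φ (t - m) ≤ ∫ t in y..x, exp c * φ t by
    rw [← Phi_sub_sub_Phi_sub, intervalIntegral.integral_const_mul, ← Phi_sub_Phi] at this
    linarith
  rcases le_total y x with hyx | hxy
  · exact intervalIntegral.integral_mono_on hyx (hint.comp_sub_right m).intervalIntegrable
      (hint.const_mul _).intervalIntegrable fun t ht ↦ gaussianPDFReal_sub_le hm hy ht.1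
  · rw [intervalIntegral.integral_symm, intervalIntegral.integral_symm x, neg_le_neg_iff]
    exact intervalIntegral.integral_mono_on hxy (hint.const_mul _).intervalIntegrable
      (hint.comp_sub_right m).intervalIntegrable fun t ht ↦ le_gaussianPDFReal_sub hm hy ht.2

lemma zero_le_Phi_sub_sub_exp_mul_Phi (hm : m < 0) (hy : m * y - m ^ 2 / 2 = c) :
    0 ≤ Phi (y - m) - exp c * Phi y := by
  have hshift : Tendsto (fun x ↦ Phi (x - m)) atBot (nhds 0) :=
    tendsto_Phi_atBot.comp (tendsto_atBot_add_const_right _ (-m) tendsto_id)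
  have := le_of_tendsto' (hshift.sub (tendsto_Phi_atBot.const_mul (exp c)))
    (Phi_sub_sub_exp_mul_Phi_le hm hy)
  simpa using this

lemma one_sub_exp_le_Phi_sub_sub_exp_mul_Phi (hm : m < 0) (hy : m * y - m ^ 2 / 2 = c) :
    1 - exp c ≤ Phi (y - m) - exp c * Phi y := by
  have hshift : Tendsto (fun x ↦ Phi (x - m)) atTop (nhds 1) :=
    tendsto_Phi_atTop.comp (tendsto_atTop_add_const_right _ (-m) tendsto_id)
  have := le_of_tendsto' (hshift.sub (tendsto_Phi_atTop.const_mul (exp c)))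
    (Phi_sub_sub_exp_mul_Phi_le hm hy)
  simpa using this

lemma oneSidedPower_sub_exp_mul_le {q v : ℝ} (hq : 0 < q) (hm : m < 0)
    (hy : m * y - m ^ 2 / 2 = c) (hv : v ∈ Icc 0 (1 / q)) :
    oneSidedPower q m v - exp c * (q * v) ≤ Phi (y - m) - exp c * Phi y := by
  rcases eq_or_ne v 0 with rfl | hv0
  · simpa [oneSidedPower] using zero_le_Phi_sub_sub_exp_mul_Phi hm hy
  rcases eq_or_ne v (1 / q) with rfl | hv1
  · simpa [oneSidedPower, hq.ne'] using one_sub_exp_le_Phi_sub_sub_exp_mul_Phi hm hy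
  have hqv : q * v ∈ Ioo 0 1 := by
    constructor
    · exact mul_pos hq (hv.1.lt_of_ne' hv0)
    · simpa [hq.ne'] using mul_lt_mul_of_pos_left (hv.2.lt_of_ne hv1) hq
  simp only [oneSidedPower, if_neg hv0, if_neg hv1]
  simpa [Phi_PhiInv hqv] using Phi_sub_sub_exp_mul_Phi_le hm hy (PhiInv (q * v))

end LikelihoodRatio

lemma oneSidedPower_Phi_div {q : ℝ} (hq : 0 < q) (m y : ℝ) :
    oneSidedPower q m (Phi y / q) = Phi (y - m) := by
  have h0 : Phi y / q ≠ 0 := (div_pos (Phi_pos y) hq).ne'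
  have h1 : Phi y / q ≠ 1 / q := by
    rw [Ne, div_left_inj' hq.ne']
    exact (Phi_lt_one y).ne
  rw [oneSidedPower, if_neg h0, if_neg h1, mul_div_cancel₀ _ hq.ne', PhiInv_Phi]

theorem stmt_19_general (q : ℝ) (hq : q ∈ Set.Ioo (0 : ℝ) 1) (J : ℕ)
    (μ : Fin J → ℝ) (hμ : ∀ i, μ i < 0)
    (c : ℝ) (hc : ∑ i, Phi (μ i / 2 + c / μ i) = J * q)
    (w : Fin J → ℝ) (hw : ∀ i, w i = Phi (μ i / 2 + c / μ i) / q) :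
    (∀ i, w i ∈ Set.Icc (0 : ℝ) (1 / q)) ∧
    (∑ i, w i = J) ∧
    (∀ v : Fin J → ℝ, (∀ i, v i ∈ Set.Icc (0 : ℝ) (1 / q)) → (∑ i, v i = J) →
      ∑ i, oneSidedPower q (μ i) (v i) ≤ ∑ i, oneSidedPower q (μ i) (w i)) := by
  obtain ⟨hq0, -⟩ := hq
  have hy (i : Fin J) : μ i * (μ i / 2 + c / μ i) - μ i ^ 2 / 2 = c := by
    field_simp [(hμ i).ne]
    ring
  refine ⟨fun i ↦ ?_, ?_, fun v hv hsum ↦ ?_⟩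
  · rw [hw i]
    exact ⟨div_nonneg (Phi_pos _).le hq0.le, div_le_div_of_nonneg_right (Phi_lt_one _).le hq0.le⟩
  · simp only [hw, ← Finset.sum_div, hc]
    field_simp
  calc ∑ i, oneSidedPower q (μ i) (v i)
      ≤ ∑ i, (Phi (μ i / 2 + c / μ i - μ i) - exp c * Phi (μ i / 2 + c / μ i)
          + exp c * (q * v i)) :=
        Finset.sum_le_sum fun i _ ↦ by
          linarith [oneSidedPower_sub_exp_mul_le hq0 (hμ i) (hy i) (hv i)]
    _ = ∑ i, Phi (μ i / 2 + c / μ i - μ i) := by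
        simp only [Finset.sum_add_distrib, Finset.sum_sub_distrib, ← Finset.mul_sum, hc, hsum]
        ring
    _ = ∑ i, oneSidedPower q (μ i) (w i) := by
        simp only [hw, oneSidedPower_Phi_div hq0]

/-- Optimality of the Spjøtvoll weights for one-sided Gaussian testing: with all
`μᵢ < 0` and `c` the unique real with `Σᵢ Φ(μᵢ/2 + c/μᵢ) = Jq`, the weights
`wᵢ = Φ(μᵢ/2 + c/μᵢ)/q` lie in `[0, 1/q]`, sum to `J`, and maximize the average-power
objective `Σᵢ Φ(Φ⁻¹(q vᵢ) − μᵢ)` over all `v ∈ [0, 1/q]^J` with `Σᵢ vᵢ = J`. -/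
theorem stmt_19 (q : ℝ) (hq : q ∈ Set.Ioo (0 : ℝ) 1) (J : ℕ) (hJ : 1 ≤ J)
    (μ : Fin J → ℝ) (hμ : ∀ i, μ i < 0)
    (c : ℝ) (hc : ∑ i, Phi (μ i / 2 + c / μ i) = J * q)
    (w : Fin J → ℝ) (hw : ∀ i, w i = Phi (μ i / 2 + c / μ i) / q) :
    (∀ i, w i ∈ Set.Icc (0 : ℝ) (1 / q)) ∧
    (∑ i, w i = J) ∧
    (∀ v : Fin J → ℝ, (∀ i, v i ∈ Set.Icc (0 : ℝ) (1 / q)) → (∑ i, v i = J) →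
      ∑ i, oneSidedPower q (μ i) (v i) ≤ ∑ i, oneSidedPower q (μ i) (w i)) :=
  stmt_19_general q hq J μ hμ c hc w hw
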